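/- arXiv:0710.2387 — 4 statements merged into one kernel-verified Lean document; each statement's English description precedes it below -/
import Mathlib

section
/- Let M₁ and M₂ be closed subspaces of a Hilbert space H and let M = M₁ ∩ M₂. Then for every x ∈ H, the sequence (P_{M₂}P_{M₁})ⁿ(x) converges in norm to P_M(x), where P_S denotes the orthogonal projection onto a closed subspace S. -/
open scoped InnerProductSpace

/-- The orthogonal projection onto a complete subspace, as a map `H → H`. -/
noncomputable def proj {𝕜 H : Type*} [RCLike 𝕜] [NormedAddCommGroup H]
    [InnerProductSpace 𝕜 H] (S : Submodule 𝕜 H) [CompleteSpace S] : H →L[𝕜] H :=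
  S.subtypeL.comp (S.orthogonalProjectionOnto)

/-!
With `B = P₁ P₂` one has `(P₂ P₁)ⁿ⁺¹ = (B⋆B)ⁿ P₂ P₁`, so it suffices to show that the powers of
`A = B⋆B` converge pointwise when `‖B‖ ≤ 1`. The numbers `re ⟪Aᵏ u, u⟫` alternate between
`‖Aⁱ u‖²` and `‖B Aⁱ u‖²` and decrease because `B` and `B⋆` are contractions; this gives
`‖Aⁿ u - Aᵐ u‖² ≤ ‖Aⁿ u‖² - ‖Aᵐ u‖²` for `n ≤ m`, so `(Aⁿ u)` is Cauchy.
The limit `z` is fixed by `P₂ P₁`; since `‖z‖ ≤ ‖P₁ z‖` forces `z ∈ M₁`, it lies in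
`M = M₁ ∩ M₂`. Finally `P_M P₂ P₁ = P_M`, so `z = P_M z = P_M x`.
-/

open Filter RCLike

theorem cauchySeq_of_dist_sq_le_sub {α : Type*} [PseudoMetricSpace α] {f : ℕ → α} {g : ℕ → ℝ}
    (hg : BddBelow (Set.range g)) (h : ∀ n m, n ≤ m → dist (f n) (f m) ^ 2 ≤ g n - g m) :
    CauchySeq f := by
  have hanti : Antitone g := fun n m hnm => by nlinarith [h n m hnm, sq_nonneg (dist (f n) (f m))]
  refine cauchySeq_of_le_tendsto_0' (fun n => √(g n - ⨅ k, g k)) (fun n m hnm => ?_) ?_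
  · exact Real.le_sqrt_of_sq_le ((h n m hnm).trans (sub_le_sub_left (ciInf_le hg m) _))
  · simpa using ((tendsto_atTop_ciInf hanti hg).sub_const (⨅ k, g k)).sqrt

section StarMulSelf

variable {𝕜 E : Type*} [RCLike 𝕜] [NormedAddCommGroup E] [InnerProductSpace 𝕜 E]
  [CompleteSpace E] (B : E →L[𝕜] E)

theorem inner_pow_star_mul_self_add_apply (u : E) (i j : ℕ) :
    ⟪((star B * B) ^ (i + j)) u, u⟫_𝕜 = ⟪((star B * B) ^ i) u, ((star B * B) ^ j) u⟫_𝕜 := by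
  rw [add_comm, pow_add, mul_apply_eq_comp]
  exact ((IsSelfAdjoint.star_mul_self B).pow j).isSymmetric _ _

theorem re_inner_pow_star_mul_self_two_mul_apply (u : E) (i : ℕ) :
    re ⟪((star B * B) ^ (2 * i)) u, u⟫_𝕜 = ‖((star B * B) ^ i) u‖ ^ 2 := by
  rw [two_mul, inner_pow_star_mul_self_add_apply, inner_self_eq_norm_sq]

theorem re_inner_pow_star_mul_self_two_mul_add_one_apply (u : E) (i : ℕ) :
    re ⟪((star B * B) ^ (2 * i + 1)) u, u⟫_𝕜 = ‖B (((star B * B) ^ i) u)‖ ^ 2 := by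
  rw [two_mul, add_assoc, inner_pow_star_mul_self_add_apply, pow_succ', mul_apply_eq_comp,
    mul_apply_eq_comp, ContinuousLinearMap.star_eq_adjoint,
    ContinuousLinearMap.adjoint_inner_right, inner_self_eq_norm_sq]

variable {B}

theorem antitone_re_inner_pow_star_mul_self_apply (hB : ‖B‖ ≤ 1) (u : E) :
    Antitone fun k => re ⟪((star B * B) ^ k) u, u⟫_𝕜 := by
  have hB' : ‖star B‖ ≤ 1 := (norm_star B).trans_le hB
  refine antitone_nat_of_succ_le fun k => ?_
  obtain ⟨i, rfl | rfl⟩ := Nat.even_or_odd' k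
  · rw [re_inner_pow_star_mul_self_two_mul_add_one_apply,
      re_inner_pow_star_mul_self_two_mul_apply]
    gcongr
    simpa using B.le_of_opNorm_le hB _
  · rw [show 2 * i + 1 + 1 = 2 * (i + 1) by ring, re_inner_pow_star_mul_self_two_mul_apply,
      re_inner_pow_star_mul_self_two_mul_add_one_apply, pow_succ' (star B * B),
      mul_apply_eq_comp, mul_apply_eq_comp]
    gcongr
    simpa using (star B).le_of_opNorm_le hB' _

theorem norm_pow_star_mul_self_apply_sub_sq_le (hB : ‖B‖ ≤ 1) (u : E) {n m : ℕ} (hnm : n ≤ m) :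
    ‖((star B * B) ^ n) u - ((star B * B) ^ m) u‖ ^ 2 ≤
      ‖((star B * B) ^ n) u‖ ^ 2 - ‖((star B * B) ^ m) u‖ ^ 2 := by
  have key : ‖((star B * B) ^ m) u‖ ^ 2 ≤ re ⟪((star B * B) ^ n) u, ((star B * B) ^ m) u⟫_𝕜 := by
    rw [← inner_pow_star_mul_self_add_apply, ← re_inner_pow_star_mul_self_two_mul_apply]
    exact antitone_re_inner_pow_star_mul_self_apply hB u (by omega)
  rw [@norm_sub_sq 𝕜]
  linarith

theorem cauchySeq_pow_star_mul_self_apply (hB : ‖B‖ ≤ 1) (u : E) :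
    CauchySeq fun n => ((star B * B) ^ n) u :=
  cauchySeq_of_dist_sq_le_sub (g := fun n => ‖((star B * B) ^ n) u‖ ^ 2)
    ⟨0, by rintro _ ⟨n, rfl⟩; positivity⟩
    fun n m hnm => by simpa [dist_eq_norm] using norm_pow_star_mul_self_apply_sub_sq_le hB u hnm

end StarMulSelf

section AlternatingProjections

variable {𝕜 H : Type*} [RCLike 𝕜] [NormedAddCommGroup H] [InnerProductSpace 𝕜 H]

theorem proj_eq_starProjection (S : Submodule 𝕜 H) [CompleteSpace S] :
    proj S = S.starProjection := rfl

variable {M₁ M₂ : Submodule 𝕜 H} [CompleteSpace M₁] [CompleteSpace M₂]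

theorem mem_inf_of_proj_proj_apply_eq_self {z : H} (hz : proj M₂ (proj M₁ z) = z) :
    z ∈ M₁ ⊓ M₂ := by
  have hz₁ : z ∈ M₁ := by
    refine (M₁.mem_iff_norm_starProjection z).2
      (le_antisymm (M₁.norm_starProjection_apply_le z) ?_)
    calc ‖z‖ = ‖proj M₂ (proj M₁ z)‖ := by rw [hz]
      _ ≤ ‖proj M₁ z‖ := M₂.norm_starProjection_apply_le _
  have hz₂ : z ∈ M₂ := by
    rw [← hz]
    exact M₂.starProjection_apply_mem _
  exact ⟨hz₁, hz₂⟩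

theorem proj_inf_mul_pow_proj_mul_proj [CompleteSpace (M₁ ⊓ M₂ : Submodule 𝕜 H)] (n : ℕ) :
    proj (M₁ ⊓ M₂) * (proj M₂ * proj M₁) ^ n = proj (M₁ ⊓ M₂) := by
  have h : proj (M₁ ⊓ M₂) * (proj M₂ * proj M₁) = proj (M₁ ⊓ M₂) := by
    simp only [proj_eq_starProjection, ContinuousLinearMap.mul_def,
      ← ContinuousLinearMap.comp_assoc,
      Submodule.starProjection_comp_starProjection_of_le inf_le_right,
      Submodule.starProjection_comp_starProjection_of_le inf_le_left]
  induction n with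
  | zero => exact mul_one _
  | succ n ih => rw [pow_succ, ← mul_assoc, ih, h]

variable [CompleteSpace H]

theorem proj_mul_proj_pow_succ (n : ℕ) :
    (proj M₂ * proj M₁) ^ (n + 1) =
      (star (proj M₁ * proj M₂) * (proj M₁ * proj M₂)) ^ n * (proj M₂ * proj M₁) := by
  have h₁ := isStarProjection_starProjection (U := M₁)
  have h₂ := isStarProjection_starProjection (U := M₂)
  have : SemiconjBy (proj M₂ * proj M₁) (proj M₂ * proj M₁)
      (star (proj M₁ * proj M₂) * (proj M₁ * proj M₂)) := by
    simp only [SemiconjBy, star_mul, proj_eq_starProjection, h₁.isSelfAdjoint.star_eq,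
      h₂.isSelfAdjoint.star_eq, mul_assoc]
    rw [← mul_assoc M₁.starProjection M₁.starProjection, h₁.isIdempotentElem.eq,
      ← mul_assoc M₂.starProjection M₂.starProjection, h₂.isIdempotentElem.eq]
  rw [pow_succ', (this.pow_right n).eq]

theorem cauchySeq_proj_mul_proj_pow_apply (x : H) :
    CauchySeq fun n => ((proj M₂ * proj M₁) ^ n) x := by
  have hB : ‖proj M₁ * proj M₂‖ ≤ 1 :=
    (norm_mul_le _ _).trans (mul_le_one₀ M₁.starProjection_norm_le (norm_nonneg _)
      M₂.starProjection_norm_le)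
  refine (cauchySeq_shift 1).1 ?_
  simpa only [proj_mul_proj_pow_succ, mul_apply_eq_comp] using
    cauchySeq_pow_star_mul_self_apply hB ((proj M₂ * proj M₁) x)

end AlternatingProjections

/-- von Neumann: the alternating projections `(P_{M₂} P_{M₁})ⁿ x` converge to `P_{M₁ ∩ M₂} x`. -/
theorem alternating_projections_converge {𝕜 H : Type*} [RCLike 𝕜] [NormedAddCommGroup H]
    [InnerProductSpace 𝕜 H] [CompleteSpace H] (M₁ M₂ : Submodule 𝕜 H)
    [CompleteSpace M₁] [CompleteSpace M₂] [CompleteSpace (M₁ ⊓ M₂ : Submodule 𝕜 H)]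
    (x : H) :
    Filter.Tendsto (fun n : ℕ => (((proj M₂).comp (proj M₁)) ^ n) x)
      Filter.atTop (nhds (proj (M₁ ⊓ M₂) x)) := by
  rw [← ContinuousLinearMap.mul_def]
  obtain ⟨z, hz⟩ := cauchySeq_tendsto_of_complete
    (cauchySeq_proj_mul_proj_pow_apply (M₁ := M₁) (M₂ := M₂) x)
  have hz_fixed : proj M₂ (proj M₁ z) = z := by
    refine tendsto_nhds_unique (((proj M₂ * proj M₁).continuous.tendsto z).comp hz) ?_
    simpa only [Function.comp_def, pow_succ', mul_apply_eq_comp] using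
      (tendsto_add_atTop_iff_nat 1).2 hz
  have hz_proj : proj (M₁ ⊓ M₂) z = proj (M₁ ⊓ M₂) x := by
    refine tendsto_nhds_unique (((proj (M₁ ⊓ M₂)).continuous.tendsto z).comp hz) ?_
    simp only [Function.comp_def, ← mul_apply_eq_comp, proj_inf_mul_pow_proj_mul_proj]
    exact tendsto_const_nhds
  rwa [← hz_proj, proj_eq_starProjection (M₁ ⊓ M₂),
    Submodule.starProjection_eq_self_iff.2 (mem_inf_of_proj_proj_apply_eq_self hz_fixed)]
end

section
/- Let M₁, M₂ be closed subspaces of a Hilbert space and M = M₁ ∩ M₂. Then c(M₁,M₂) < 1 if and only if M₁ + M₂ is a closed subspace. -/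
open scoped InnerProductSpace

/-- The cosine of the Friedrichs angle between two subspaces. -/
noncomputable def fcos {𝕜 H : Type*} [RCLike 𝕜] [NormedAddCommGroup H]
    [InnerProductSpace 𝕜 H] (M₁ M₂ : Submodule 𝕜 H) : ℝ :=
  sSup {r : ℝ | ∃ x ∈ M₁ ⊓ (M₁ ⊓ M₂)ᗮ, ∃ y ∈ M₂ ⊓ (M₁ ⊓ M₂)ᗮ,
    ‖x‖ ≤ 1 ∧ ‖y‖ ≤ 1 ∧ r = ‖(⟪x, y⟫_𝕜 : 𝕜)‖}

/-! With `M = M₁ ⊓ M₂`, `A = M₁ ⊓ Mᗮ` and `B = M₂ ⊓ Mᗮ`, we have `A ⊓ B = ⊥`,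
`A ⊔ B = (M₁ ⊔ M₂) ⊓ Mᗮ` and `M₁ ⊔ M₂ = M ⊕ (A ⊔ B)` orthogonally, so `M₁ ⊔ M₂` is closed iff
`A ⊔ B` is. By the open mapping theorem `A ⊔ B` is closed iff `c ‖(a, b)‖ ≤ ‖a + b‖` for some
`c > 0`, and since `‖a + b‖² = ‖a‖² + ‖b‖² + 2 re ⟪a, b⟫`, such a lower bound is equivalent to a
bound `‖⟪a, b⟫‖ ≤ c' ‖a‖ ‖b‖` with `c' < 1`, i.e. to `fcos M₁ M₂ < 1`. -/

section

variable {𝕜 H : Type*} [RCLike 𝕜] [NormedAddCommGroup H] [InnerProductSpace 𝕜 H]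

namespace Submodule

variable {M K : Submodule 𝕜 H} [M.HasOrthogonalProjection]

theorem sub_starProjection_mem_inf_orthogonal (h : M ≤ K) {x : H} (hx : x ∈ K) :
    x - M.starProjection x ∈ K ⊓ Mᗮ :=
  ⟨K.sub_mem hx (h (M.starProjection_apply_mem x)), M.sub_starProjection_mem_orthogonal x⟩

theorem isClosed_iff_isClosed_inf_orthogonal (h : M ≤ K) :
    IsClosed (K : Set H) ↔ IsClosed ((K ⊓ Mᗮ : Submodule 𝕜 H) : Set H) := by
  refine ⟨fun hK => hK.inter M.isClosed_orthogonal, fun hK => ?_⟩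
  have hpre : (K : Set H) = (fun z => z - M.starProjection z) ⁻¹' (K ⊓ Mᗮ : Submodule 𝕜 H) := by
    ext z
    refine ⟨sub_starProjection_mem_inf_orthogonal h, fun hz => ?_⟩
    simpa using K.add_mem hz.1 (h (M.starProjection_apply_mem z))
  rw [hpre]
  exact hK.preimage (continuous_id.sub M.starProjection.continuous)

theorem inf_orthogonal_sup_inf_orthogonal {M₁ M₂ : Submodule 𝕜 H} (h₁ : M ≤ M₁) (h₂ : M ≤ M₂) :
    M₁ ⊓ Mᗮ ⊔ M₂ ⊓ Mᗮ = (M₁ ⊔ M₂) ⊓ Mᗮ := by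
  refine le_antisymm (sup_le (inf_le_inf_right _ le_sup_left) (inf_le_inf_right _ le_sup_right)) ?_
  rintro z ⟨hz, hzM⟩
  obtain ⟨x₁, hx₁, x₂, hx₂, rfl⟩ := mem_sup.1 hz
  have hsplit : x₁ + x₂ = (x₁ - M.starProjection x₁) + (x₂ - M.starProjection x₂) := by
    have : M.starProjection (x₁ + x₂) = 0 := (starProjection_apply_eq_zero_iff M).2 hzM
    rw [map_add] at this
    rw [← add_sub_add_comm, this, sub_zero]
  rw [hsplit]
  exact add_mem_sup (sub_starProjection_mem_inf_orthogonal h₁ hx₁)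
    (sub_starProjection_mem_inf_orthogonal h₂ hx₂)

end Submodule

theorem isClosed_sup_iff_exists_mul_max_norm_le [CompleteSpace H] {A B : Submodule 𝕜 H}
    (hA : IsClosed (A : Set H)) (hB : IsClosed (B : Set H)) (hAB : Disjoint A B) :
    IsClosed ((A ⊔ B : Submodule 𝕜 H) : Set H) ↔
      ∃ c > 0, ∀ a ∈ A, ∀ b ∈ B, c * max ‖a‖ ‖b‖ ≤ ‖a + b‖ := by
  have := hA.completeSpace_coe
  have := hB.completeSpace_coe
  -- By the open mapping theorem, the addition map `A × B → H` has closed range iff it is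
  -- bounded below.
  set T := A.subtypeL.coprod B.subtypeL
  have hrange : Set.range T = (A ⊔ B : Submodule 𝕜 H) := by
    ext z
    simp [T, Submodule.mem_sup, eq_comm]
  have hinj : Function.Injective T := by
    refine (injective_iff_map_eq_zero T).2 fun ⟨⟨a, ha⟩, ⟨b, hb⟩⟩ hab => ?_
    have hab : a + b = 0 := hab
    have ha0 : a = 0 :=
      Submodule.disjoint_def.1 hAB a ha (eq_neg_of_add_eq_zero_left hab ▸ B.neg_mem hb)
    subst ha0
    simp_all
  rw [← hrange, T.isClosed_range_iff_antilipschitz_of_injective hinj,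
    antilipschitzWith_iff_exists_mul_le_norm]
  simp [T, Prod.norm_def]

theorem mul_max_norm_le_norm_add_of_norm_inner_le {c : ℝ} (hc : 0 ≤ c) {a b : H}
    (h : ‖⟪a, b⟫_𝕜‖ ≤ c * (‖a‖ * ‖b‖)) : (1 - c) * max ‖a‖ ‖b‖ ≤ ‖a + b‖ := by
  rcases le_or_gt 1 c with hc1 | hc1
  · exact (mul_nonpos_of_nonpos_of_nonneg (by linarith) (by positivity)).trans (norm_nonneg _)
  have hre : -(c * (‖a‖ * ‖b‖)) ≤ RCLike.re ⟪a, b⟫_𝕜 :=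
    (neg_le_neg (h.trans' (RCLike.abs_re_le_norm _))).trans (neg_abs_le _)
  have hmax : max ‖a‖ ‖b‖ ^ 2 ≤ ‖a‖ ^ 2 + ‖b‖ ^ 2 := by
    rcases max_choice ‖a‖ ‖b‖ with hm | hm <;> rw [hm] <;> nlinarith
  have hsq : ((1 - c) * max ‖a‖ ‖b‖) ^ 2 ≤ ‖a + b‖ ^ 2 :=
    calc ((1 - c) * max ‖a‖ ‖b‖) ^ 2 ≤ (1 - c) * max ‖a‖ ‖b‖ ^ 2 := by
          rw [mul_pow, sq (1 - c), mul_assoc]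
          exact mul_le_of_le_one_left (by positivity) (by linarith)
      _ ≤ (1 - c) * (‖a‖ ^ 2 + ‖b‖ ^ 2) := by gcongr
      _ ≤ ‖a‖ ^ 2 + 2 * RCLike.re ⟪a, b⟫_𝕜 + ‖b‖ ^ 2 := by
          nlinarith [mul_nonneg hc (sq_nonneg (‖a‖ - ‖b‖))]
      _ = ‖a + b‖ ^ 2 := (norm_add_sq (𝕜 := 𝕜) a b).symm
  exact le_of_pow_le_pow_left₀ two_ne_zero (norm_nonneg _) hsq

theorem norm_inner_le_one_sub_of_mul_norm_le_norm_add {A B : Submodule 𝕜 H} {c : ℝ} (hc : 0 ≤ c)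
    (h : ∀ a ∈ A, ∀ b ∈ B, c * ‖a‖ ≤ ‖a + b‖) {a b : H} (ha : a ∈ A) (hb : b ∈ B)
    (ha1 : ‖a‖ = 1) (hb1 : ‖b‖ = 1) : ‖⟪a, b⟫_𝕜‖ ≤ 1 - c ^ 2 / 2 := by
  set z := ⟪a, b⟫_𝕜
  -- Rotating `b` by `-conj z` turns `⟪a, b⟫` into the real number `-‖z‖ ^ 2`.
  have hw : ‖a + (-(starRingEnd 𝕜) z) • b‖ ^ 2 = 1 - ‖z‖ ^ 2 := by
    rw [norm_add_sq (𝕜 := 𝕜), inner_smul_right, norm_smul, ha1, hb1, neg_mul, RCLike.conj_mul]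
    simp only [one_pow, map_neg, RCLike.re_ofReal_pow, mul_neg, norm_neg, RCLike.norm_conj, mul_one]
    ring
  have hcw := h a ha _ (B.smul_mem (-(starRingEnd 𝕜) z) hb)
  rw [ha1, mul_one] at hcw
  have hsq : c ^ 2 ≤ 1 - ‖z‖ ^ 2 := hw ▸ pow_le_pow_left₀ hc hcw 2
  nlinarith [norm_nonneg z]

theorem norm_inner_le_mul_of_norm_eq_one {A B : Submodule 𝕜 H} {c : ℝ}
    (h : ∀ x ∈ A, ∀ y ∈ B, ‖x‖ = 1 → ‖y‖ = 1 → ‖⟪x, y⟫_𝕜‖ ≤ c) {a b : H} (ha : a ∈ A)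
    (hb : b ∈ B) : ‖⟪a, b⟫_𝕜‖ ≤ c * (‖a‖ * ‖b‖) := by
  rcases eq_or_ne a 0 with rfl | ha0
  · simp
  rcases eq_or_ne b 0 with rfl | hb0
  · simp
  have hunit := h _ (A.smul_mem (‖a‖⁻¹ : 𝕜) ha) _ (B.smul_mem (‖b‖⁻¹ : 𝕜) hb)
    (norm_smul_inv_norm ha0) (norm_smul_inv_norm hb0)
  rw [inner_smul_left, inner_smul_right, norm_mul, norm_mul, RCLike.norm_conj, norm_inv, norm_inv,
    RCLike.norm_ofReal, RCLike.norm_ofReal, abs_norm, abs_norm, ← mul_assoc, ← mul_inv,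
    inv_mul_le_iff₀ (by positivity)] at hunit
  linarith

theorem isClosed_sup_iff_exists_norm_inner_le [CompleteSpace H] {A B : Submodule 𝕜 H}
    (hA : IsClosed (A : Set H)) (hB : IsClosed (B : Set H)) (hAB : Disjoint A B) :
    IsClosed ((A ⊔ B : Submodule 𝕜 H) : Set H) ↔
      ∃ c < 1, ∀ a ∈ A, ∀ b ∈ B, ‖⟪a, b⟫_𝕜‖ ≤ c * (‖a‖ * ‖b‖) := by
  rw [isClosed_sup_iff_exists_mul_max_norm_le hA hB hAB]
  constructor
  · rintro ⟨c, hc, h⟩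
    have h' : ∀ a ∈ A, ∀ b ∈ B, c * ‖a‖ ≤ ‖a + b‖ := fun a ha b hb =>
      (mul_le_mul_of_nonneg_left (le_max_left _ _) hc.le).trans (h a ha b hb)
    exact ⟨1 - c ^ 2 / 2, by nlinarith, fun a ha b hb => norm_inner_le_mul_of_norm_eq_one
      (fun x hx y hy => norm_inner_le_one_sub_of_mul_norm_le_norm_add hc.le h' hx hy) ha hb⟩
  · rintro ⟨c, hc, h⟩
    refine ⟨1 - max c 0, sub_pos.2 (max_lt hc one_pos), fun a ha b hb =>
      mul_max_norm_le_norm_add_of_norm_inner_le (le_max_right c 0) ((h a ha b hb).trans ?_)⟩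
    gcongr
    exact le_max_left c 0

section fcos

variable {M₁ M₂ : Submodule 𝕜 H}

theorem norm_inner_le_fcos_mul {x y : H} (hx : x ∈ M₁ ⊓ (M₁ ⊓ M₂)ᗮ) (hy : y ∈ M₂ ⊓ (M₁ ⊓ M₂)ᗮ) :
    ‖⟪x, y⟫_𝕜‖ ≤ fcos M₁ M₂ * (‖x‖ * ‖y‖) := by
  have hbdd : BddAbove {r : ℝ | ∃ x ∈ M₁ ⊓ (M₁ ⊓ M₂)ᗮ, ∃ y ∈ M₂ ⊓ (M₁ ⊓ M₂)ᗮ,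
      ‖x‖ ≤ 1 ∧ ‖y‖ ≤ 1 ∧ r = ‖⟪x, y⟫_𝕜‖} := by
    refine ⟨1, ?_⟩
    rintro _ ⟨a, -, b, -, ha1, hb1, rfl⟩
    exact (norm_inner_le_norm a b).trans (mul_le_one₀ ha1 (norm_nonneg b) hb1)
  exact norm_inner_le_mul_of_norm_eq_one (fun a ha b hb ha1 hb1 =>
    le_csSup hbdd ⟨a, ha, b, hb, ha1.le, hb1.le, rfl⟩) hx hy

theorem fcos_le_of_norm_inner_le {c : ℝ} (hc : 0 ≤ c)
    (h : ∀ x ∈ M₁ ⊓ (M₁ ⊓ M₂)ᗮ, ∀ y ∈ M₂ ⊓ (M₁ ⊓ M₂)ᗮ, ‖⟪x, y⟫_𝕜‖ ≤ c * (‖x‖ * ‖y‖)) :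
    fcos M₁ M₂ ≤ c := by
  refine csSup_le ⟨0, 0, zero_mem _, 0, zero_mem _, by simp⟩ ?_
  rintro _ ⟨x, hx, y, hy, hx1, hy1, rfl⟩
  exact (h x hx y hy).trans (mul_le_of_le_one_right hc (mul_le_one₀ hx1 (norm_nonneg y) hy1))

theorem fcos_lt_one_iff : fcos M₁ M₂ < 1 ↔
    ∃ c < 1, ∀ x ∈ M₁ ⊓ (M₁ ⊓ M₂)ᗮ, ∀ y ∈ M₂ ⊓ (M₁ ⊓ M₂)ᗮ, ‖⟪x, y⟫_𝕜‖ ≤ c * (‖x‖ * ‖y‖) := by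
  refine ⟨fun h => ⟨_, h, fun x hx y hy => norm_inner_le_fcos_mul hx hy⟩, fun ⟨c, hc, h⟩ => ?_⟩
  refine (fcos_le_of_norm_inner_le (le_max_right c 0) fun x hx y hy =>
    (h x hx y hy).trans ?_).trans_lt (max_lt hc one_pos)
  gcongr
  exact le_max_left c 0

end fcos

end

/-- `c(M₁,M₂) < 1` iff `M₁ + M₂` is closed. -/
theorem fcos_lt_one_iff_sum_closed {𝕜 H : Type*} [RCLike 𝕜] [NormedAddCommGroup H]
    [InnerProductSpace 𝕜 H] [CompleteSpace H] (M₁ M₂ : Submodule 𝕜 H)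
    (hM₁ : IsClosed (M₁ : Set H)) (hM₂ : IsClosed (M₂ : Set H)) :
    fcos M₁ M₂ < 1 ↔ IsClosed ((M₁ ⊔ M₂ : Submodule 𝕜 H) : Set H) := by
  set M := M₁ ⊓ M₂
  have : CompleteSpace M := (hM₁.inter hM₂).completeSpace_coe
  have hdisj : Disjoint (M₁ ⊓ Mᗮ) (M₂ ⊓ Mᗮ) := by
    rw [disjoint_iff_inf_le, ← M.inf_orthogonal_eq_bot]
    exact le_inf (inf_le_inf inf_le_left inf_le_left) (inf_le_left.trans inf_le_right)
  rw [fcos_lt_one_iff, ← isClosed_sup_iff_exists_norm_inner_le (hM₁.inter M.isClosed_orthogonal)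
      (hM₂.inter M.isClosed_orthogonal) hdisj,
    Submodule.inf_orthogonal_sup_inf_orthogonal inf_le_left inf_le_right,
    ← Submodule.isClosed_iff_isClosed_inf_orthogonal (inf_le_left.trans le_sup_left)]
end

section
/- Let M₁, M₂ be closed subspaces of a Hilbert space, M = M₁ ∩ M₂, A = M₁ ∩ M^⊥, B = M₂ ∩ M^⊥. Then c(M₁,M₂) = ‖P_B P_A‖. -/
open scoped InnerProductSpace

/-! Since `P_A` and `P_B` are self-adjoint, `⟪P_B P_A x, y⟫ = ⟪P_A x, P_B y⟫`, and `P_A`, `P_B` map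
the unit ball of the whole space into the unit balls of `A` and `B` while fixing those. Hence the
supremum of `‖⟪x, y⟫‖` over the unit balls of `A` and `B` is the supremum of `‖⟪P_B P_A x, y⟫‖` over
the unit ball, which is `‖P_B P_A‖`. -/

namespace Submodule

variable {𝕜 H : Type*} [RCLike 𝕜] [NormedAddCommGroup H] [InnerProductSpace 𝕜 H]

def unitInnerNorms (A B : Submodule 𝕜 H) : Set ℝ :=
  {r : ℝ | ∃ x ∈ A, ∃ y ∈ B, ‖x‖ ≤ 1 ∧ ‖y‖ ≤ 1 ∧ r = ‖(⟪x, y⟫_𝕜 : 𝕜)‖}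

variable (A B : Submodule 𝕜 H)

theorem zero_mem_unitInnerNorms : (0 : ℝ) ∈ A.unitInnerNorms B :=
  ⟨0, A.zero_mem, 0, B.zero_mem, by simp, by simp, by simp⟩

variable [A.HasOrthogonalProjection] [B.HasOrthogonalProjection]

theorem inner_starProjection_comp_starProjection_apply (x y : H) :
    ⟪(B.starProjection ∘L A.starProjection) x, y⟫_𝕜 =
      ⟪A.starProjection x, B.starProjection y⟫_𝕜 :=
  B.inner_starProjection_left_eq_right _ y

theorem isLUB_unitInnerNorms :
    IsLUB (A.unitInnerNorms B) ‖B.starProjection ∘L A.starProjection‖ := by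
  set T := B.starProjection ∘L A.starProjection
  constructor
  · rintro _ ⟨x, hx, y, hy, hx1, hy1, rfl⟩
    have hxy : ⟪x, y⟫_𝕜 = ⟪T x, y⟫_𝕜 := by
      rw [inner_starProjection_comp_starProjection_apply, starProjection_eq_self_iff.mpr hx,
        starProjection_eq_self_iff.mpr hy]
    calc ‖⟪x, y⟫_𝕜‖ = ‖⟪T x, y⟫_𝕜‖ := by rw [hxy]
      _ ≤ ‖T x‖ * ‖y‖ := norm_inner_le_norm _ _
      _ ≤ ‖T‖ * ‖x‖ * ‖y‖ := mul_le_mul_of_nonneg_right (T.le_opNorm x) (norm_nonneg y)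
      _ ≤ ‖T‖ * 1 * 1 := by gcongr
      _ = ‖T‖ := by ring
  · intro C hC
    refine T.opNorm_le_of_re_inner_le (hC (A.zero_mem_unitInnerNorms B)) fun x y hx hy => ?_
    have hmem : ‖⟪A.starProjection x, B.starProjection y⟫_𝕜‖ ∈ A.unitInnerNorms B :=
      ⟨_, A.starProjection_apply_mem x, _, B.starProjection_apply_mem y,
        hx ▸ A.norm_starProjection_apply_le x, hy ▸ B.norm_starProjection_apply_le y, rfl⟩
    calc RCLike.re ⟪T x, y⟫_𝕜 ≤ ‖⟪T x, y⟫_𝕜‖ := RCLike.re_le_norm _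
      _ = ‖⟪A.starProjection x, B.starProjection y⟫_𝕜‖ := by
        rw [inner_starProjection_comp_starProjection_apply]
      _ ≤ C := hC hmem

end Submodule

theorem fcos_eq_norm_comp_general {𝕜 H : Type*} [RCLike 𝕜] [NormedAddCommGroup H]
    [InnerProductSpace 𝕜 H] (M₁ M₂ : Submodule 𝕜 H)
    [CompleteSpace (M₁ ⊓ (M₁ ⊓ M₂)ᗮ : Submodule 𝕜 H)]
    [CompleteSpace (M₂ ⊓ (M₁ ⊓ M₂)ᗮ : Submodule 𝕜 H)] :
    fcos M₁ M₂ = ‖(proj (M₂ ⊓ (M₁ ⊓ M₂)ᗮ)).comp (proj (M₁ ⊓ (M₁ ⊓ M₂)ᗮ))‖ :=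
  (Submodule.isLUB_unitInnerNorms _ _).csSup_eq ⟨0, Submodule.zero_mem_unitInnerNorms _ _⟩

/-- `c(M₁,M₂) = ‖P_B P_A‖` where `A = M₁ ∩ M^⊥`, `B = M₂ ∩ M^⊥`. -/
theorem fcos_eq_norm_comp {𝕜 H : Type*} [RCLike 𝕜] [NormedAddCommGroup H]
    [InnerProductSpace 𝕜 H] [CompleteSpace H] (M₁ M₂ : Submodule 𝕜 H)
    [CompleteSpace M₁] [CompleteSpace M₂]
    [CompleteSpace (M₁ ⊓ (M₁ ⊓ M₂)ᗮ : Submodule 𝕜 H)]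
    [CompleteSpace (M₂ ⊓ (M₁ ⊓ M₂)ᗮ : Submodule 𝕜 H)] :
    fcos M₁ M₂ = ‖(proj (M₂ ⊓ (M₁ ⊓ M₂)ᗮ)).comp (proj (M₁ ⊓ (M₁ ⊓ M₂)ᗮ))‖ :=
  fcos_eq_norm_comp_general M₁ M₂
end

section
/- In a separable Hilbert space with orthonormal basis (u_n)_{n≥1}, define C₁ as the closed span of { u_{2n} + (1/n)u_{2n−1} : n ∈ ℕ } and C₂ as the closed span of { u_{2n} + (1/n)u_{2n+1} : n ∈ ℕ }. Then C₁ ∩ C₂ = {0}. -/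
/-!
Each generator involves only two basis vectors, so a suitable combination of those two is
orthogonal to all the other generators, hence pairs to zero with the whole closed span. Pairing
`x ∈ C₁ ∩ C₂` with these combinations compares its coefficients `c k = ⟪u k, x⟫`: `C₁` gives
`c (2n) = c (2n+1) / (n+1)`, and `C₂` gives `c (2n+2) = c (2n+1) / (n+1)` and `c 0 = 0`. So every
even coefficient equals `c 0 = 0`, then so does every odd one, and `x` is orthogonal to the total
family `u`.
-/

open Submodule Set
open scoped InnerProductSpace ComplexConjugate

section

variable {𝕜 E ι κ : Type*} [RCLike 𝕜] [NormedAddCommGroup E] [InnerProductSpace 𝕜 E]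

theorem inner_eq_zero_of_mem_closure_span {f : κ → E} {z y : E}
    (hz : ∀ m, ⟪z, f m⟫_𝕜 = 0) (hy : y ∈ (span 𝕜 (range f)).topologicalClosure) :
    ⟪z, y⟫_𝕜 = 0 := by
  have hle : (span 𝕜 (range f)).topologicalClosure ≤ (𝕜 ∙ z)ᗮ :=
    topologicalClosure_minimal _
      (span_le.2 <| range_subset_iff.2 fun m =>
        mem_orthogonal_singleton_iff_inner_right.2 (hz m))
      (isClosed_orthogonal _)
  exact mem_orthogonal_singleton_iff_inner_right.1 (hle hy)

namespace Orthonormal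

variable {u : ι → E} {p q : κ → ι} {b : κ → 𝕜} {x : E}

theorem inner_eq_zero_of_mem_closure_span_add_smul (hu : Orthonormal 𝕜 u)
    (hx : x ∈ (span 𝕜 (range fun m => u (p m) + b m • u (q m))).topologicalClosure) {k : ι}
    (hpk : ∀ m, p m ≠ k) (hqk : ∀ m, q m ≠ k) : ⟪u k, x⟫_𝕜 = 0 :=
  inner_eq_zero_of_mem_closure_span (fun m => by
    rw [inner_add_right, inner_smul_right, hu.inner_eq_zero (hpk m).symm,
      hu.inner_eq_zero (hqk m).symm, mul_zero, add_zero]) hx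

theorem inner_eq_mul_of_mem_closure_span_add_smul (hu : Orthonormal 𝕜 u)
    (hx : x ∈ (span 𝕜 (range fun m => u (p m) + b m • u (q m))).topologicalClosure)
    (hp : p.Injective) (hq : q.Injective) (hpq : ∀ m m', p m ≠ q m') (m : κ) :
    ⟪u (q m), x⟫_𝕜 = b m * ⟪u (p m), x⟫_𝕜 := by
  have horth :
      ∀ m', ⟪u (q m) - conj (b m) • u (p m), u (p m') + b m' • u (q m')⟫_𝕜 = 0 := by
    intro m'
    rcases eq_or_ne m' m with rfl | hm
    · simp [inner_add_right, inner_sub_left, inner_smul_left, inner_smul_right,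
        hu.inner_eq_zero (hpq m' m').symm, hu.inner_eq_zero (hpq m' m'), hu.1]
    · simp [inner_add_right, inner_sub_left, inner_smul_left, inner_smul_right,
        hu.inner_eq_zero (hpq m' m).symm, hu.inner_eq_zero (hpq m m'),
        hu.inner_eq_zero (hp.ne hm).symm, hu.inner_eq_zero (hq.ne hm).symm]
  have := inner_eq_zero_of_mem_closure_span horth hx
  rwa [inner_sub_left, inner_smul_left, RCLike.conj_conj, sub_eq_zero] at this

end Orthonormal

end

theorem closed_span_inter_eq_bot_general {𝕜 H : Type*} [RCLike 𝕜] [NormedAddCommGroup H]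
    [InnerProductSpace 𝕜 H] (u : ℕ → H) (hu : Orthonormal 𝕜 u)
    (htotal : (Submodule.span 𝕜 (Set.range u)).topologicalClosure = ⊤) :
    (Submodule.span 𝕜
        (Set.range fun n : ℕ => u (2 * n + 1) + ((n : 𝕜) + 1)⁻¹ • u (2 * n))).topologicalClosure
      ⊓ (Submodule.span 𝕜
        (Set.range fun n : ℕ =>
          u (2 * n + 1) + ((n : 𝕜) + 1)⁻¹ • u (2 * n + 2))).topologicalClosure = ⊥ := by
  rw [Submodule.eq_bot_iff]
  rintro x ⟨hx₁, hx₂⟩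
  have hodd : (fun n : ℕ => 2 * n + 1).Injective := fun _ _ h => by simp_all
  have h₁ := hu.inner_eq_mul_of_mem_closure_span_add_smul hx₁ hodd
    (fun _ _ h => by simp_all) (fun _ _ => by omega)
  have h₂ := hu.inner_eq_mul_of_mem_closure_span_add_smul hx₂ hodd
    (fun _ _ h => by simp_all) (fun _ _ => by omega)
  have h₀ := hu.inner_eq_zero_of_mem_closure_span_add_smul hx₂ (k := 0)
    (fun _ => by omega) (fun _ => by omega)
  have heven : ∀ n, ⟪u (2 * n), x⟫_𝕜 = 0 := by
    intro n
    induction n with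
    | zero => exact h₀
    | succ n ih => rw [mul_add, mul_one, h₂ n, ← h₁ n, ih]
  have hall : ∀ k, ⟪u k, x⟫_𝕜 = 0 := by
    intro k
    obtain ⟨n, rfl | rfl⟩ := Nat.even_or_odd' k
    · exact heven n
    · simpa [heven n, Nat.cast_add_one_ne_zero] using (h₁ n).symm
  exact inner_self_eq_zero.1 <|
    inner_eq_zero_of_mem_closure_span (fun k => inner_eq_zero_symm.1 (hall k)) (htotal ▸ mem_top)

/-- With `(u_n)_{n≥1}` an orthonormal basis (here `u i` denotes `u_{i+1}`), the closed
spans `C₁` of `{u_{2n} + (1/n)u_{2n−1}}` and `C₂` of `{u_{2n} + (1/n)u_{2n+1}}`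
intersect trivially. -/
theorem closed_span_inter_eq_bot {𝕜 H : Type*} [RCLike 𝕜] [NormedAddCommGroup H]
    [InnerProductSpace 𝕜 H] [CompleteSpace H] (u : ℕ → H) (hu : Orthonormal 𝕜 u)
    (htotal : (Submodule.span 𝕜 (Set.range u)).topologicalClosure = ⊤) :
    (Submodule.span 𝕜
        (Set.range fun n : ℕ => u (2 * n + 1) + ((n : 𝕜) + 1)⁻¹ • u (2 * n))).topologicalClosure
      ⊓ (Submodule.span 𝕜
        (Set.range fun n : ℕ =>
          u (2 * n + 1) + ((n : 𝕜) + 1)⁻¹ • u (2 * n + 2))).topologicalClosure = ⊥ :=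
  closed_span_inter_eq_bot_general u hu htotal
end
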